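/- For the grid graph G(m,n) = P_m □ P_n with m,n ≥ 2, MEG(G(m,n)) = 2(m+n−2), and the unique minimum MEG-set is the set of boundary vertices of the grid. -/

import Mathlib

/-!
Distances in `P_m □ P_n` are ℓ¹ distances, so a geodesic between two vertices of one row never
leaves that row and, running from one side of each of its edges to the other, uses all of them.
Hence the two ends of a row monitor every edge of the row; with columns treated likewise, the
boundary is an MEG-set.

Conversely, let `x, y` monitor a horizontal edge of row `b`. Of the two L-shaped geodesics from
`x` to `y` (row first, or column first) one has its horizontal edges in the row of `x`, the other
in the row of `y`; so both lie in row `b`, and the edge lies between them. If an end of that edge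
is a boundary vertex of the row, it must be `x` or `y`. Every boundary vertex is such an end, so
every MEG-set contains the boundary, which is therefore the unique minimum one; columns reduce to
rows through the isomorphism `P_m □ P_n ≃ P_n □ P_m`.
-/

open SimpleGraph

/-- Two vertices `x` and `y` monitor an edge `e` in `G`: there is a shortest path between
them, and `e` lies on every shortest path between `x` and `y`. -/
def Monitors {V : Type*} (G : SimpleGraph V) (x y : V) (e : Sym2 V) : Prop :=
  (∃ p : G.Walk x y, p.IsPath ∧ p.length = G.dist x y) ∧
    ∀ p : G.Walk x y, p.IsPath → p.length = G.dist x y → e ∈ p.edges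

/-- `S` is a monitoring edge-geodetic set of `G`. -/
def IsMEGSet {V : Type*} (G : SimpleGraph V) (S : Set V) : Prop :=
  ∀ e ∈ G.edgeSet, ∃ x ∈ S, ∃ y ∈ S, Monitors G x y e

/-- The minimum size of a monitoring edge-geodetic set of `G`. -/
noncomputable def megNum {V : Type*} (G : SimpleGraph V) : ℕ :=
  sInf {n | ∃ S : Set V, IsMEGSet G S ∧ S.ncard = n}

/-- The set of leaves (degree-1 vertices) of `G`. -/
def leaves {V : Type*} (G : SimpleGraph V) : Set V :=
  {v | (G.neighborSet v).ncard = 1}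

namespace SimpleGraph

section Metric

variable {V W : Type*} {G : SimpleGraph V} {G' : SimpleGraph W}

lemma Walk.dist_add_dist_le_length {u v w : V} (p : G.Walk u v) (hw : w ∈ p.support) :
    G.dist u w + G.dist w v ≤ p.length := by
  classical
  rw [← p.take_spec hw, Walk.length_append]
  exact add_le_add (dist_le _) (dist_le _)

lemma edist_map_le (f : G →g G') (u v : V) : G'.edist (f u) (f v) ≤ G.edist u v :=
  le_sInf <| by
    rintro _ ⟨p, rfl⟩
    simpa using edist_le (p.map f)

lemma Iso.dist_eq (φ : G ≃g G') (u v : V) : G'.dist (φ u) (φ v) = G.dist u v := by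
  have h : G'.edist (φ u) (φ v) = G.edist u v := by
    refine le_antisymm (edist_map_le φ.toHom u v) ?_
    simpa using edist_map_le φ.symm.toHom (φ u) (φ v)
  simp only [dist, h]

end Metric

section BoxProd

variable {α β : Type*} {G : SimpleGraph α} {H : SimpleGraph β}

lemma Walk.length_boxProdLeft {a a' : α} (q : G.Walk a a') (b : β) :
    (q.boxProdLeft H b).length = q.length :=
  Walk.length_map _ _

lemma Walk.length_boxProdRight {b b' : β} (q : H.Walk b b') (a : α) :
    (q.boxProdRight G a).length = q.length :=
  Walk.length_map _ _

lemma Walk.snd_eq_of_mem_support_boxProdLeft {a a' : α} (q : G.Walk a a') (b : β) {z : α × β}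
    (hz : z ∈ (q.boxProdLeft H b).support) : z.2 = b := by
  obtain ⟨_, _, rfl⟩ := List.mem_map.1
    ((Walk.support_map _ _).subst hz : z ∈ q.support.map (G.boxProdLeft H b))
  rfl

lemma Walk.fst_eq_of_mem_support_boxProdRight {b b' : β} (q : H.Walk b b') (a : α) {z : α × β}
    (hz : z ∈ (q.boxProdRight G a).support) : z.1 = a := by
  obtain ⟨_, _, rfl⟩ := List.mem_map.1
    ((Walk.support_map _ _).subst hz : z ∈ q.support.map (G.boxProdRight H a))
  rfl

lemma dist_boxProd (hG : G.Preconnected) (hH : H.Preconnected) (x y : α × β) :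
    (G □ H).dist x y = G.dist x.1 y.1 + H.dist x.2 y.2 := by
  have h := (reachable_boxProd.2 ⟨hG x.1 y.1, hH x.2 y.2⟩).coe_dist_eq_edist
  rw [edist_boxProd, ← (hG x.1 y.1).coe_dist_eq_edist, ← (hH x.2 y.2).coe_dist_eq_edist] at h
  exact_mod_cast h

lemma Walk.snd_eq_of_length_eq_dist (hG : G.Preconnected) (hH : H.Preconnected)
    {a a' : α} {b : β} (p : (G □ H).Walk (a, b) (a', b))
    (hp : p.length = (G □ H).dist (a, b) (a', b)) {z : α × β} (hz : z ∈ p.support) :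
    z.2 = b := by
  have hle := p.dist_add_dist_le_length hz
  rw [hp, dist_boxProd hG hH, dist_boxProd hG hH, dist_boxProd hG hH] at hle
  have htri := (hG a z.1).dist_triangle_left a'
  have hzero : H.dist b z.2 = 0 := by simp only [dist_self] at hle; omega
  exact (((hH b z.2).dist_eq_zero_iff).1 hzero).symm

end BoxProd

section PathGraph

lemma Walk.sub_add_sub_le_length {n : ℕ} {i j : Fin n} (p : (pathGraph n).Walk i j) :
    (i : ℕ) - j + (j - i) ≤ p.length := by
  induction p with
  | nil => simp
  | cons h _ ih => rw [pathGraph_adj] at h; rw [Walk.length_cons]; omega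

lemma dist_pathGraph_le {n : ℕ} {i j : Fin n} (hij : i ≤ j) :
    (pathGraph n).dist i j ≤ j - i := by
  obtain ⟨k, hk⟩ := Nat.exists_eq_add_of_le (Fin.le_def.1 hij)
  induction k generalizing j with
  | zero => simp [Fin.ext (hk.trans (Nat.add_zero _)).symm]
  | succ k ih =>
    set j' : Fin n := ⟨i + k, by omega⟩
    have hadj : (pathGraph n).Adj j' j := pathGraph_adj.2 (Or.inl (by simp [j']; omega))
    calc (pathGraph n).dist i j ≤ (pathGraph n).dist i j' + (pathGraph n).dist j' j :=
          (pathGraph_preconnected n i j').dist_triangle_left j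
      _ ≤ j' - i + 1 := add_le_add (ih (Fin.le_def.2 (by simp [j'])) rfl)
          (dist_eq_one_iff_adj.2 hadj).le
      _ = j - i := by simp [j']; omega

lemma dist_pathGraph {n : ℕ} (i j : Fin n) :
    (pathGraph n).dist i j = (i : ℕ) - j + (j - i) := by
  obtain ⟨p, hp⟩ := (pathGraph_preconnected n i j).exists_walk_length_eq_dist
  refine le_antisymm ?_ (hp ▸ p.sub_add_sub_le_length)
  rcases le_total i j with hij | hji
  · have := dist_pathGraph_le hij; omega
  · have := dist_pathGraph_le hji; rw [dist_comm]; omega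

lemma pathGraph_exists_adj {n : ℕ} (hn : 2 ≤ n) (i : Fin n) : ∃ j, (pathGraph n).Adj i j := by
  by_cases hi : (i : ℕ) + 1 < n
  · exact ⟨⟨i + 1, hi⟩, pathGraph_adj.2 (Or.inl rfl)⟩
  · exact ⟨⟨i - 1, by omega⟩, pathGraph_adj.2 (Or.inr (by simp; omega))⟩

end PathGraph

end SimpleGraph

section Monitoring

variable {V W : Type*} {G : SimpleGraph V} {G' : SimpleGraph W}

lemma Monitors.mem_edges {x y : V} {e : Sym2 V} (h : Monitors G x y e) (p : G.Walk x y)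
    (hp : p.length = G.dist x y) : e ∈ p.edges :=
  h.2 p (p.isPath_of_length_eq_dist hp) hp

lemma Monitors.symm {x y : V} {e : Sym2 V} (h : Monitors G x y e) : Monitors G y x e := by
  obtain ⟨p, hp, hpl⟩ := h.1
  refine ⟨⟨p.reverse, hp.reverse, by rw [Walk.length_reverse, hpl, dist_comm]⟩, fun q _ hq => ?_⟩
  simpa using h.mem_edges q.reverse (by rw [Walk.length_reverse, hq, dist_comm])

lemma Monitors.map_iso (φ : G ≃g G') {x y : V} {e : Sym2 V} (h : Monitors G x y e) :
    Monitors G' (φ x) (φ y) (e.map φ) := by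
  obtain ⟨p, hp, hpl⟩ := h.1
  refine ⟨⟨p.map φ.toHom, hp.map φ.injective, by simp [hpl, φ.dist_eq]⟩, fun q _ hq => ?_⟩
  have he := h.mem_edges ((q.map φ.symm.toHom).copy (by simp) (by simp))
    (by simp [hq, φ.dist_eq])
  simp only [Walk.edges_copy, Walk.edges_map, List.mem_map] at he
  obtain ⟨e', he', rfl⟩ := he
  simpa [Sym2.map_map] using he'

lemma IsMEGSet.image_iso (φ : G ≃g G') {S : Set V} (hS : IsMEGSet G S) :
    IsMEGSet G' (φ '' S) := by
  intro e he
  obtain ⟨x, hx, y, hy, hxy⟩ := hS (e.map φ.symm) <| by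
    induction e using Sym2.ind with | _ u v => exact φ.symm.map_adj_iff.2 he
  refine ⟨φ x, Set.mem_image_of_mem φ hx, φ y, Set.mem_image_of_mem φ hy, ?_⟩
  simpa [Sym2.map_map] using hxy.map_iso φ

lemma megNum_eq_ncard_of_subset [Finite V] {S₀ : Set V} (h₀ : IsMEGSet G S₀)
    (hmin : ∀ S, IsMEGSet G S → S₀ ⊆ S) : megNum G = S₀.ncard :=
  le_antisymm (Nat.sInf_le ⟨S₀, h₀, rfl⟩) <|
    le_csInf ⟨_, S₀, h₀, rfl⟩ <| by
      rintro _ ⟨S, hS, rfl⟩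
      exact Set.ncard_le_ncard (hmin S hS)

end Monitoring

section BoxProdMonitoring

variable {α β : Type*} {G : SimpleGraph α} {H : SimpleGraph β}

lemma Monitors.snd_eq_of_fst_ne (hG : G.Preconnected) (hH : H.Preconnected) {x y : α × β}
    {a a' : α} {b : β} (h : Monitors (G □ H) x y s((a, b), (a', b))) (ha : a ≠ a') :
    x.2 = b := by
  obtain ⟨x₁, x₂⟩ := x
  obtain ⟨y₁, y₂⟩ := y
  obtain ⟨q₁, hq₁⟩ := (hG x₁ y₁).exists_walk_length_eq_dist
  obtain ⟨q₂, hq₂⟩ := (hH x₂ y₂).exists_walk_length_eq_dist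
  have he := h.mem_edges ((q₁.boxProdLeft H x₂).append (q₂.boxProdRight G y₁)) <| by
    rw [Walk.length_append, Walk.length_boxProdLeft, Walk.length_boxProdRight, hq₁, hq₂,
      dist_boxProd hG hH]
  rw [Walk.edges_append, List.mem_append] at he
  rcases he with he | he
  · exact (q₁.snd_eq_of_mem_support_boxProdLeft x₂ (Walk.fst_mem_support_of_mem_edges _ he)).symm
  · exact absurd ((q₂.fst_eq_of_mem_support_boxProdRight y₁
      (Walk.fst_mem_support_of_mem_edges _ he)).trans
      (q₂.fst_eq_of_mem_support_boxProdRight y₁ (Walk.snd_mem_support_of_mem_edges _ he)).symm) ha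

variable {m : ℕ}

lemma monitors_pathGraph_boxProd (hH : H.Preconnected) (b : β) {i j c c' : Fin m}
    (hc : (c : ℕ) + 1 = c') (hi : i ≤ c) (hj : c' ≤ j) :
    Monitors (pathGraph m □ H) (i, b) (j, b) s((c, b), (c', b)) := by
  have hG := pathGraph_preconnected m
  refine ⟨(reachable_boxProd.2 ⟨hG i j, hH b b⟩).exists_path_of_dist, fun p _ hp => ?_⟩
  have hlayer : ∀ z ∈ p.support, z.2 = b := fun z hz => p.snd_eq_of_length_eq_dist hG hH hp hz
  -- the dart by which `p` leaves `{z | z.1 ≤ c}` is the edge `s((c, b), (c', b))`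
  obtain ⟨d, hd, hd₁, hd₂⟩ :=
    p.exists_boundary_dart {z : Fin m × β | z.1 ≤ c} hi
      (show ¬ j ≤ c by simp only [Fin.le_def] at hj ⊢; omega)
  have hb₁ := hlayer _ (p.dart_fst_mem_support_of_mem_darts hd)
  have hb₂ := hlayer _ (p.dart_snd_mem_support_of_mem_darts hd)
  simp only [Set.mem_ofPred_eq, Fin.le_def] at hd₁ hd₂
  have hstep : (d.fst.1 : ℕ) + 1 = d.snd.1 := by
    rcases boxProd_adj.1 d.adj with ⟨hadj, -⟩ | ⟨-, heq⟩
    · rw [pathGraph_adj] at hadj; omega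
    · rw [heq] at hd₁; omega
  have hfst : d.fst = (c, b) := Prod.ext (Fin.ext (show (d.fst.1 : ℕ) = c by omega)) hb₁
  have hsnd : d.snd = (c', b) := Prod.ext (Fin.ext (show (d.snd.1 : ℕ) = c' by omega)) hb₂
  rw [← hfst, ← hsnd]
  exact List.mem_map_of_mem (f := Dart.edge) hd

lemma monitors_pathGraph_boxProd_of_ends (hH : H.Preconnected) {i j c c' : Fin m}
    (hi : (i : ℕ) = 0) (hj : (j : ℕ) = m - 1) (hc : (pathGraph m).Adj c c') (b : β) :
    Monitors (pathGraph m □ H) (i, b) (j, b) s((c, b), (c', b)) := by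
  have := j.isLt
  rcases pathGraph_adj.1 hc with h | h
  · exact monitors_pathGraph_boxProd hH b h (Fin.le_def.2 (by omega)) (Fin.le_def.2 (by omega))
  · rw [Sym2.eq_swap]
    exact monitors_pathGraph_boxProd hH b h (Fin.le_def.2 (by omega)) (Fin.le_def.2 (by omega))

lemma Monitors.eq_or_eq_of_fst_extreme (hH : H.Preconnected) {x y v : Fin m × β} {c : Fin m}
    (h : Monitors (pathGraph m □ H) x y s(v, (c, v.2))) (hc : v.1 ≠ c)
    (hv : (v.1 : ℕ) = 0 ∨ (v.1 : ℕ) = m - 1) : v = x ∨ v = y := by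
  have hG := pathGraph_preconnected m
  obtain ⟨v₁, v₂⟩ := v
  dsimp only at hv
  have hx : x.2 = v₂ := h.snd_eq_of_fst_ne hG hH hc
  have hy : y.2 = v₂ := h.symm.snd_eq_of_fst_ne hG hH hc
  obtain ⟨p, -, hp⟩ := h.1
  have hle := p.dist_add_dist_le_length (p.fst_mem_support_of_mem_edges (h.mem_edges p hp))
  simp only [hp, dist_boxProd hG hH, dist_pathGraph, hx, hy, dist_self] at hle
  have := x.1.isLt
  have := y.1.isLt
  rcases (by omega : (v₁ : ℕ) = x.1 ∨ (v₁ : ℕ) = y.1) with hx₁ | hy₁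
  · exact .inl (Prod.ext (Fin.ext hx₁) hx.symm)
  · exact .inr (Prod.ext (Fin.ext hy₁) hy.symm)

lemma IsMEGSet.mem_of_fst_extreme (hm : 2 ≤ m) (hH : H.Preconnected) {S : Set (Fin m × β)}
    (hS : IsMEGSet (pathGraph m □ H) S) {v : Fin m × β}
    (hv : (v.1 : ℕ) = 0 ∨ (v.1 : ℕ) = m - 1) : v ∈ S := by
  obtain ⟨c, hc⟩ := pathGraph_exists_adj hm v.1
  obtain ⟨x, hx, y, hy, hxy⟩ := hS s(v, (c, v.2)) (boxProd_adj_left.2 hc)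
  rcases hxy.eq_or_eq_of_fst_extreme hH hc.ne hv with rfl | rfl
  exacts [hx, hy]

end BoxProdMonitoring

section Grid

def gridBoundary (m n : ℕ) : Set (Fin m × Fin n) :=
  {q | q.1.val = 0 ∨ q.1.val = m - 1 ∨ q.2.val = 0 ∨ q.2.val = n - 1}

lemma isMEGSet_gridBoundary (m n : ℕ) :
    IsMEGSet (pathGraph m □ pathGraph n) (gridBoundary m n) := by
  rintro e he
  induction e using Sym2.ind with | _ u w =>
  obtain ⟨u₁, u₂⟩ := u
  obtain ⟨w₁, w₂⟩ := w
  rcases boxProd_adj.1 he with ⟨hadj, rfl : u₂ = w₂⟩ | ⟨hadj, rfl : u₁ = w₁⟩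
  · have := u₁.pos
    exact ⟨(⟨0, by omega⟩, u₂), .inl rfl, (⟨m - 1, by omega⟩, u₂), .inr (.inl rfl),
      monitors_pathGraph_boxProd_of_ends (pathGraph_preconnected n) rfl rfl hadj u₂⟩
  · have := u₂.pos
    refine ⟨(u₁, ⟨0, by omega⟩), .inr (.inr (.inl rfl)), (u₁, ⟨n - 1, by omega⟩),
      .inr (.inr (.inr rfl)), ?_⟩
    simpa using (monitors_pathGraph_boxProd_of_ends (pathGraph_preconnected m) rfl rfl hadj
      u₁).map_iso (boxProdComm (pathGraph n) (pathGraph m))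

lemma gridBoundary_subset {m n : ℕ} (hm : 2 ≤ m) (hn : 2 ≤ n) {S : Set (Fin m × Fin n)}
    (hS : IsMEGSet (pathGraph m □ pathGraph n) S) : gridBoundary m n ⊆ S := by
  have hS' := hS.image_iso (boxProdComm _ _)
  rintro v (hv | hv | hv | hv)
  · exact hS.mem_of_fst_extreme hm (pathGraph_preconnected n) (.inl hv)
  · exact hS.mem_of_fst_extreme hm (pathGraph_preconnected n) (.inr hv)
  · exact (boxProdComm _ _).injective.mem_set_image.1
      (hS'.mem_of_fst_extreme hn (pathGraph_preconnected m) (.inl hv))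
  · exact (boxProdComm _ _).injective.mem_set_image.1
      (hS'.mem_of_fst_extreme hn (pathGraph_preconnected m) (.inr hv))

lemma ncard_fin_ends {k : ℕ} (hk : 2 ≤ k) :
    {i : Fin k | (i : ℕ) = 0 ∨ (i : ℕ) = k - 1}.ncard = 2 := by
  have : {i : Fin k | (i : ℕ) = 0 ∨ (i : ℕ) = k - 1} = {⟨0, by omega⟩, ⟨k - 1, by omega⟩} := by
    ext i
    simp [Fin.ext_iff]
  rw [this, Set.ncard_pair (by simp [Fin.ext_iff]; omega)]

lemma ncard_gridBoundary {m n : ℕ} (hm : 2 ≤ m) (hn : 2 ≤ n) :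
    (gridBoundary m n).ncard = 2 * (m + n - 2) := by
  have hcompl : (gridBoundary m n)ᶜ = {i : Fin m | (i : ℕ) = 0 ∨ (i : ℕ) = m - 1}ᶜ ×ˢ
      {j : Fin n | (j : ℕ) = 0 ∨ (j : ℕ) = n - 1}ᶜ := by
    ext
    simp [gridBoundary, and_assoc]
  have hsum := Set.ncard_add_ncard_compl (gridBoundary m n)
  rw [hcompl, Set.ncard_prod, Set.ncard_compl, Set.ncard_compl, ncard_fin_ends hm,
    ncard_fin_ends hn] at hsum
  simp only [Nat.card_eq_fintype_card, Fintype.card_prod, Fintype.card_fin] at hsum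
  obtain ⟨a, rfl⟩ := Nat.exists_eq_add_of_le' hm
  obtain ⟨b, rfl⟩ := Nat.exists_eq_add_of_le' hn
  simp only [Nat.add_sub_cancel] at hsum
  rw [show a + 2 + (b + 2) - 2 = a + b + 2 by omega]
  nlinarith

end Grid

theorem grid_MEG (m n : ℕ) (hm : 2 ≤ m) (hn : 2 ≤ n) :
    megNum (pathGraph m □ pathGraph n) = 2 * (m + n - 2) ∧
    IsMEGSet (pathGraph m □ pathGraph n)
      {q : Fin m × Fin n | q.1.val = 0 ∨ q.1.val = m - 1 ∨ q.2.val = 0 ∨ q.2.val = n - 1} ∧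
    ∀ S : Set (Fin m × Fin n), IsMEGSet (pathGraph m □ pathGraph n) S →
      {q : Fin m × Fin n | q.1.val = 0 ∨ q.1.val = m - 1 ∨ q.2.val = 0 ∨ q.2.val = n - 1} ⊆ S := by
  have hmin : ∀ S, IsMEGSet (pathGraph m □ pathGraph n) S → gridBoundary m n ⊆ S :=
    fun _ hS => gridBoundary_subset hm hn hS
  refine ⟨?_, isMEGSet_gridBoundary m n, hmin⟩
  rw [megNum_eq_ncard_of_subset (isMEGSet_gridBoundary m n) hmin, ncard_gridBoundary hm hn]
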